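/- arXiv:1505.01379 — 2 statements merged into one kernel-verified Lean document; each statement's English description precedes it below -/
import Mathlib

section
/- Let 𝔽_q be a finite field of characteristic p and let P(X,Y), Q(X,Y) ∈ 𝔽_q[X,Y] be polynomials where Q has nonzero constant term Q(0,0) ≠ 0 (so Q is invertible in 𝔽_q[[X,Y]]). Let u : ℕ² → 𝔽_q be the coefficient double sequence of the formal power series P·Q^{-1} ∈ 𝔽_q[[X,Y]], i.e., u(m,n) = [X^m Y^n](P·Q^{-1}). Then the p-kernel of u, namely the set of double sequences { (m,n) ↦ u(m·p^k + r, n·p^k + s) : k ∈ ℕ, 0 ≤ r, s < p^k }, is finite. -/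
/-!
With the Cartier operators `Λ_c f = ∑ₑ [X^{p e + c}] f · Xᵉ`, the kernel sequence indexed by
`(k, r, s)` is the coefficient sequence of `Λ_{c_k} ⋯ Λ_{c_1} (P / Q)`, where the `c_i` are the
base-`p` digits of `(r, s)`. In characteristic `p`, `g ^ p = expand_p (g^{(p)})` with `g^{(p)}`
obtained by raising every coefficient to the `p`-th power, so `Λ_c (f g^p) = Λ_c(f) g^{(p)}` and
`Λ_c (A / B) = Λ_c (A B^{p-1}) / B^{(p)}`. If `A` and `B` have total degree at most `D`, then
`A B^{p-1}` has degree at most `p D`, so `Λ_c (A B^{p-1})` and `B^{(p)}` again have degree at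
most `D`. Hence the set of fractions `A / B` with `deg A, deg B ≤ D` and `B(0) ≠ 0`, which is
finite over a finite field, is stable under every `Λ_c`, and for `D = max (deg P) (deg Q)` it
contains `P / Q`.
-/

namespace Finsupp

theorem le_and_eq_nsmul_sub_add_of_add_nsmul_eq {σ : Type*} {p : ℕ} {a b c d : σ →₀ ℕ}
    (hc : ∀ i, c i < p) (h : a + p • b = p • d + c) : b ≤ d ∧ a = p • (d - b) + c := by
  have hi (i : σ) : a i + p * b i = p * d i + c i := by
    simpa using DFunLike.congr_fun h i
  have hle (i : σ) : b i ≤ d i := by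
    by_contra! hlt
    nlinarith [hi i, hc i]
  refine ⟨fun i => hle i, Finsupp.ext fun i => ?_⟩
  have := hi i
  have := Nat.mul_le_mul_left p (hle i)
  simp only [Finsupp.add_apply, Finsupp.smul_apply, smul_eq_mul, Finsupp.tsub_apply, Nat.mul_sub]
  omega

end Finsupp

namespace MvPowerSeries

variable {σ R : Type*} [CommRing R]

noncomputable def cartier (p : ℕ) (c : σ →₀ ℕ) (f : MvPowerSeries σ R) : MvPowerSeries σ R :=
  fun e => coeff (p • e + c) f

@[simp]
theorem coeff_cartier (p : ℕ) (c e : σ →₀ ℕ) (f : MvPowerSeries σ R) :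
    coeff e (cartier p c f) = coeff (p • e + c) f :=
  rfl

theorem cartier_one_zero (f : MvPowerSeries σ R) : cartier 1 0 f = f := by
  ext e
  rw [coeff_cartier, one_smul, add_zero]

theorem cartier_cartier (p q : ℕ) (c d : σ →₀ ℕ) (f : MvPowerSeries σ R) :
    cartier q d (cartier p c f) = cartier (p * q) (p • d + c) f := by
  ext e
  simp only [coeff_cartier, smul_add, mul_smul, add_assoc]

theorem cartier_pow_mem {p : ℕ} {S : Set (MvPowerSeries σ R)}
    (hS : ∀ c : σ →₀ ℕ, (∀ i, c i < p) → ∀ f ∈ S, cartier p c f ∈ S) {f : MvPowerSeries σ R}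
    (hf : f ∈ S) (n : ℕ) {r : σ →₀ ℕ} (hr : ∀ i, r i < p ^ n) : cartier (p ^ n) r f ∈ S := by
  induction n generalizing f r with
  | zero =>
    obtain rfl : r = 0 := Finsupp.ext fun i => by simpa using hr i
    rwa [pow_zero, cartier_one_zero]
  | succ n ih =>
    have hp (i : σ) : 0 < p := Nat.pos_of_ne_zero fun h => by simpa [h] using hr i
    have hr' : r = p • r.mapRange (· / p) (Nat.zero_div p) + r.mapRange (· % p) (Nat.zero_mod p) :=
      Finsupp.ext fun i => by simp [Nat.div_add_mod]
    rw [hr', pow_succ', ← cartier_cartier]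
    refine ih (hS _ (fun i => Nat.mod_lt _ (hp i)) f hf) fun i => ?_
    rw [Finsupp.mapRange_apply, Nat.div_lt_iff_lt_mul (hp i), ← pow_succ]
    exact hr i

theorem cartier_mul_expand {p : ℕ} (hp : p ≠ 0) {c : σ →₀ ℕ} (hc : ∀ i, c i < p)
    (f g : MvPowerSeries σ R) :
    cartier p c (f * expand p hp g) = cartier p c f * g := by
  classical
  ext d
  rw [coeff_cartier, coeff_mul, coeff_mul]
  symm
  refine Finset.sum_bij_ne_zero (fun x _ _ => (p • x.1 + c, p • x.2)) ?_ ?_ ?_ ?_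
  · rintro ⟨a, b⟩ hab -
    rw [Finset.HasAntidiagonal.mem_antidiagonal] at hab ⊢
    rw [← hab, smul_add, add_right_comm]
  · rintro ⟨a₁, b₁⟩ - - ⟨a₂, b₂⟩ - - h
    simp only [Prod.mk.injEq, add_left_inj, nsmul_right_inj hp] at h
    rw [h.1, h.2]
  · rintro ⟨a, b⟩ hab hne
    rw [Finset.HasAntidiagonal.mem_antidiagonal] at hab
    obtain ⟨b', -, rfl⟩ := support_expand_subset p hp g (right_ne_zero_of_mul hne)
    obtain ⟨hle, rfl⟩ := Finsupp.le_and_eq_nsmul_sub_add_of_add_nsmul_eq hc hab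
    refine ⟨(d - b', b'), ?_, ?_, rfl⟩
    · rw [Finset.HasAntidiagonal.mem_antidiagonal, tsub_add_cancel_of_le hle]
    · simpa only [coeff_cartier, coeff_expand_smul] using hne
  · rintro ⟨a, b⟩ - -
    rw [coeff_cartier, coeff_expand_smul]

theorem cartier_mul_pow {p : ℕ} [ExpChar R p] {c : σ →₀ ℕ} (hc : ∀ i, c i < p)
    (f g : MvPowerSeries σ R) :
    cartier p c (f * g ^ p) = cartier p c f * map (frobenius R p) g := by
  have hp := expChar_ne_zero R p
  rw [← map_frobenius_expand p hp, map_expand, cartier_mul_expand hp hc]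

def DegreeLE (D : ℕ) (f : MvPowerSeries σ R) : Prop :=
  ∀ e : σ →₀ ℕ, D < e.degree → coeff e f = 0

theorem DegreeLE.mono {D E : ℕ} {f : MvPowerSeries σ R} (hf : DegreeLE D f) (h : D ≤ E) :
    DegreeLE E f :=
  fun e he => hf e (h.trans_lt he)

theorem degreeLE_one : DegreeLE 0 (1 : MvPowerSeries σ R) := by
  classical
  intro e he
  rw [coeff_one, if_neg]
  rintro rfl
  simp at he

theorem DegreeLE.mul {D E : ℕ} {f g : MvPowerSeries σ R} (hf : DegreeLE D f)
    (hg : DegreeLE E g) : DegreeLE (D + E) (f * g) := by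
  classical
  intro e he
  rw [coeff_mul]
  refine Finset.sum_eq_zero fun ⟨a, b⟩ hab => ?_
  rw [Finset.HasAntidiagonal.mem_antidiagonal] at hab
  have : a.degree + b.degree = e.degree := by rw [← map_add, hab]
  rcases lt_or_ge D a.degree with ha | ha
  · rw [hf a ha, zero_mul]
  · rw [hg b (by omega), mul_zero]

theorem DegreeLE.pow {D : ℕ} {f : MvPowerSeries σ R} (hf : DegreeLE D f) (n : ℕ) :
    DegreeLE (n * D) (f ^ n) := by
  induction n with
  | zero => simpa using degreeLE_one
  | succ n ih => simpa [pow_succ, add_mul] using ih.mul hf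

theorem DegreeLE.map {S : Type*} [CommRing S] {D : ℕ} {f : MvPowerSeries σ R}
    (hf : DegreeLE D f) (φ : R →+* S) : DegreeLE D (map φ f) := by
  intro e he
  rw [coeff_map, hf e he, map_zero]

theorem DegreeLE.cartier {p D : ℕ} (hp : 0 < p) (c : σ →₀ ℕ) {f : MvPowerSeries σ R}
    (hf : DegreeLE (p * D) f) : DegreeLE D (cartier p c f) := by
  intro e he
  rw [coeff_cartier]
  apply hf
  have : p * (D + 1) ≤ p * e.degree := Nat.mul_le_mul_left p he
  simp only [map_add, map_nsmul, smul_eq_mul]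
  nlinarith

theorem degreeLE_coe (P : MvPolynomial σ R) : DegreeLE P.totalDegree (P : MvPowerSeries σ R) :=
  fun _ he => MvPolynomial.coeff_eq_zero_of_totalDegree_lt he

theorem finite_setOf_degreeLE [Finite σ] [Finite R] (D : ℕ) :
    {f : MvPowerSeries σ R | DegreeLE D f}.Finite := by
  have : Finite {e : σ →₀ ℕ // e.degree ≤ D} := (Finsupp.finite_of_degree_le D).to_subtype
  refine Set.Finite.of_injOn (f := fun f (e : {e : σ →₀ ℕ // e.degree ≤ D}) => coeff e.1 f)
    (Set.mapsTo_univ _ _) (fun f hf g hg hfg => ?_) Set.finite_univ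
  ext e
  by_cases he : e.degree ≤ D
  · exact congr_fun hfg ⟨e, he⟩
  · rw [not_le] at he
    rw [hf e he, hg e he]

section Field

variable {k : Type*} [Field k]

theorem map_inv {l : Type*} [Field l] (f : k →+* l) (φ : MvPowerSeries σ k) :
    map f φ⁻¹ = (map f φ)⁻¹ := by
  by_cases hφ : constantCoeff φ = 0
  · rw [inv_eq_zero.mpr hφ, map_zero, eq_comm, inv_eq_zero, constantCoeff_map, hφ, map_zero]
  · have hfφ : constantCoeff (map f φ) ≠ 0 := by
      rwa [constantCoeff_map, map_ne_zero]
    rw [MvPowerSeries.eq_inv_iff_mul_eq_one hfφ, ← map_mul, MvPowerSeries.inv_mul_cancel _ hφ,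
      map_one]

theorem cartier_mul_inv {p : ℕ} [ExpChar k p] {c : σ →₀ ℕ} (hc : ∀ i, c i < p)
    (f : MvPowerSeries σ k) {g : MvPowerSeries σ k} (hg : constantCoeff g ≠ 0) :
    cartier p c (f * g⁻¹) = cartier p c (f * g ^ (p - 1)) * (map (frobenius k p) g)⁻¹ := by
  have hp := expChar_pos k p
  have hg' : g ^ (p - 1) * g⁻¹ ^ p = g⁻¹ := by
    calc g ^ (p - 1) * g⁻¹ ^ p = (g * g⁻¹) ^ (p - 1) * g⁻¹ := by
          rw [mul_pow, mul_assoc, ← pow_succ, Nat.sub_add_cancel hp]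
      _ = g⁻¹ := by rw [MvPowerSeries.mul_inv_cancel _ hg, one_pow, one_mul]
  rw [← map_inv, ← cartier_mul_pow hc, mul_assoc, hg']

def fractionsDegreeLE (D : ℕ) : Set (MvPowerSeries σ k) :=
  Set.image2 (fun f g => f * g⁻¹) {f | DegreeLE D f} {g | DegreeLE D g ∧ constantCoeff g ≠ 0}

theorem finite_fractionsDegreeLE [Finite σ] [Finite k] (D : ℕ) :
    (fractionsDegreeLE (σ := σ) (k := k) D).Finite :=
  (finite_setOf_degreeLE D).image2 _ ((finite_setOf_degreeLE D).subset fun _ hg => hg.1)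

theorem cartier_mem_fractionsDegreeLE {p : ℕ} [ExpChar k p] {c : σ →₀ ℕ} (hc : ∀ i, c i < p)
    {D : ℕ} {φ : MvPowerSeries σ k} (hφ : φ ∈ fractionsDegreeLE D) :
    cartier p c φ ∈ fractionsDegreeLE D := by
  obtain ⟨f, hf, g, ⟨hg, hg0⟩, rfl⟩ := hφ
  have hp := expChar_pos k p
  refine ⟨_, ?_, map (frobenius k p) g, ⟨hg.map _, ?_⟩, (cartier_mul_inv hc f hg0).symm⟩
  · refine DegreeLE.cartier hp c ((hf.mul (hg.pow (p - 1))).mono ?_)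
    rw [add_comm, ← add_one_mul, Nat.sub_one_add_one hp.ne']
  · rw [constantCoeff_map, frobenius_def]
    exact pow_ne_zero p hg0

end Field

end MvPowerSeries

open MvPowerSeries in
/-- **Proposition 2 of the paper.**
For polynomials `P, Q ∈ 𝔽_q[X,Y]` with `Q(0,0) ≠ 0`, the `p`-kernel of the
coefficient double sequence of the power series `P·Q⁻¹ ∈ 𝔽_q[[X,Y]]` is
finite.  Two-variable polynomials are encoded as `MvPolynomial (Fin 2) F`
(variable `0` is `X`, variable `1` is `Y`), and `u(m,n)` is the coefficient
of `X^m Y^n` in `P·Q⁻¹`. -/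
theorem kernel_of_rational_finite
    (F : Type*) [Field F] [Fintype F] (p : ℕ) [Fact p.Prime] [CharP F p]
    (P Q : MvPolynomial (Fin 2) F)
    (hQ0 : MvPolynomial.eval (0 : Fin 2 → F) Q ≠ 0)
    (u : ℕ → ℕ → F)
    (hu : ∀ m n : ℕ, u m n =
      MvPowerSeries.coeff (R := F) (Finsupp.single 0 m + Finsupp.single 1 n)
        ((P : MvPowerSeries (Fin 2) F) * (Q : MvPowerSeries (Fin 2) F)⁻¹)) :
    {v : ℕ → ℕ → F | ∃ k r s : ℕ, r < p ^ k ∧ s < p ^ k ∧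
        v = fun m n => u (m * p ^ k + r) (n * p ^ k + s)}.Finite := by
  set D := max P.totalDegree Q.totalDegree
  have hQ : constantCoeff (Q : MvPowerSeries (Fin 2) F) ≠ 0 := by
    rwa [← coeff_zero_eq_constantCoeff_apply, MvPolynomial.coeff_coe,
      ← MvPolynomial.constantCoeff_eq, ← MvPolynomial.eval_zero]
  have hPQ : (P : MvPowerSeries (Fin 2) F) * (Q : MvPowerSeries (Fin 2) F)⁻¹ ∈
      fractionsDegreeLE D :=
    ⟨_, (degreeLE_coe P).mono (le_max_left _ _), _,
      ⟨(degreeLE_coe Q).mono (le_max_right _ _), hQ⟩, rfl⟩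
  refine ((finite_fractionsDegreeLE (σ := Fin 2) (k := F) D).image
    fun φ m n => coeff (Finsupp.single 0 m + Finsupp.single 1 n) φ).subset ?_
  rintro v ⟨k, r, s, hr, hs, rfl⟩
  refine ⟨_, cartier_pow_mem (p := p) (fun c hc _ => cartier_mem_fractionsDegreeLE hc) hPQ k
    (r := Finsupp.single 0 r + Finsupp.single 1 s) fun i => ?_, ?_⟩
  · fin_cases i <;> simpa
  · ext m n
    rw [hu]
    dsimp only
    rw [coeff_cartier, smul_add, Finsupp.smul_single, Finsupp.smul_single,
      add_add_add_comm, ← Finsupp.single_add, ← Finsupp.single_add, smul_eq_mul, smul_eq_mul,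
      mul_comm m, mul_comm n]
end

section
/- Over the field 𝔽₂ with two elements, the set of formal power series f ∈ 𝔽₂[[X]] satisfying (1+X)³ f² + (1+X)² f + X = 0 has exactly two elements; moreover these two solutions are distinguished by their constant terms, one having constant term 0 and the other constant term 1. -/
/-!
Multiplying by `u = 1 + X`, the equation becomes `u * ((u f) ^ 2 + u f) = X`, i.e. the
Artin–Schreier equation `F ^ 2 + F = X * u⁻¹` for `F = u f` (signs do not matter in
characteristic two). Its right-hand side has no constant term, so it has a root `r` with
`r 0 = 0`, computed coefficient by coefficient. Since
`(F ^ 2 + F) + (G ^ 2 + G) = (F + G) * (F + G + 1)` in characteristic two, the roots are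
exactly `r` and `r + 1`.
-/

open PowerSeries

namespace PowerSeries

variable {R : Type*}

instance instCharP [Semiring R] (p : ℕ) [CharP R p] : CharP R⟦X⟧ p :=
  charP_of_injective_ringHom C_injective p

theorem coeff_pow_expChar [CommRing R] (p : ℕ) [ExpChar R p] (f : R⟦X⟧) (n : ℕ) :
    coeff n (f ^ p) = if p ∣ n then coeff (n / p) f ^ p else 0 := by
  have hp := expChar_ne_zero R p
  rw [← MvPowerSeries.map_frobenius_expand p hp]
  change frobenius R p (coeff n (expand p hp f)) = _
  rw [coeff_expand]
  split_ifs <;> simp [frobenius_def, zero_pow hp]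

section ArtinSchreier

variable [CommRing R]

/-- In characteristic two `coeff n (F ^ 2)` is `coeff (n / 2) F ^ 2` for even `n` and `0`
otherwise, so `F ^ 2 + F = c` determines `coeff n F` from `coeff n c` and `coeff (n / 2) F`. -/
noncomputable def artinSchreierCoeff (c : R⟦X⟧) : ℕ → R
  | 0 => 0
  | n + 1 => coeff (n + 1) c + if 2 ∣ n + 1 then artinSchreierCoeff c ((n + 1) / 2) ^ 2 else 0

noncomputable def artinSchreierRoot (c : R⟦X⟧) : R⟦X⟧ :=
  mk (artinSchreierCoeff c)

theorem constantCoeff_artinSchreierRoot (c : R⟦X⟧) :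
    constantCoeff (artinSchreierRoot c) = 0 := by
  rw [← coeff_zero_eq_constantCoeff_apply, artinSchreierRoot, coeff_mk, artinSchreierCoeff]

theorem artinSchreierRoot_sq_add_self [CharP R 2] {c : R⟦X⟧} (hc : constantCoeff c = 0) :
    artinSchreierRoot c ^ 2 + artinSchreierRoot c = c := by
  ext (_ | n)
  · simp [hc, constantCoeff_artinSchreierRoot]
  · rw [map_add, coeff_pow_expChar, artinSchreierRoot, coeff_mk, coeff_mk, artinSchreierCoeff,
      add_left_comm, CharTwo.add_self_eq_zero, add_zero]

end ArtinSchreier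

end PowerSeries

theorem CharTwo.sq_add_self_eq_sq_add_self_iff {A : Type*} [CommRing A] [NoZeroDivisors A]
    [CharP A 2] {x y : A} : x ^ 2 + x = y ^ 2 + y ↔ x = y ∨ x = y + 1 := by
  have factor : (x ^ 2 + x) + (y ^ 2 + y) = (x + y) * (x + y + 1) := by
    linear_combination -x * y * CharTwo.two_eq_zero (R := A)
  rw [← CharTwo.add_eq_zero, factor, mul_eq_zero, CharTwo.add_eq_zero, add_assoc,
    CharTwo.add_eq_zero]

theorem PowerSeries.sq_add_self_eq_iff {R : Type*} [CommRing R] [IsDomain R] [CharP R 2]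
    {c F : R⟦X⟧} (hc : constantCoeff c = 0) :
    F ^ 2 + F = c ↔ F = artinSchreierRoot c ∨ F = artinSchreierRoot c + 1 := by
  conv_lhs => rw [← artinSchreierRoot_sq_add_self hc]
  exact CharTwo.sq_add_self_eq_sq_add_self_iff

/-- **Example 1 of the paper.**  Over `𝔽₂`, the equation
`(1+X)³ f² + (1+X)² f + X = 0` has exactly two formal power series solutions,
one with constant term `0` and the other with constant term `1`. -/
theorem two_solutions_example_one :
    ∃ f g : PowerSeries (ZMod 2),
      {h : PowerSeries (ZMod 2) |
          (1 + PowerSeries.X) ^ 3 * h ^ 2 + (1 + PowerSeries.X) ^ 2 * h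
            + PowerSeries.X = 0} = {f, g} ∧
      PowerSeries.constantCoeff f = 0 ∧
      PowerSeries.constantCoeff g = 1 := by
  set u : (ZMod 2)⟦X⟧ := 1 + X
  have hu : constantCoeff u = 1 := by simp [u]
  have hu0 : constantCoeff u ≠ 0 := by simp [hu]
  have hc : constantCoeff (X * u⁻¹) = 0 := by simp
  set r := artinSchreierRoot (X * u⁻¹)
  refine ⟨r * u⁻¹, (r + 1) * u⁻¹, ?_, ?_, ?_⟩
  · ext h
    have reduce : u ^ 3 * h ^ 2 + u ^ 2 * h + X = ((h * u) ^ 2 + h * u) * u + X := by ring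
    simp only [Set.mem_ofPred_eq, Set.mem_insert_iff, Set.mem_singleton_iff]
    rw [reduce, CharTwo.add_eq_zero, ← eq_mul_inv_iff_mul_eq hu0, sq_add_self_eq_iff hc,
      ← eq_mul_inv_iff_mul_eq hu0, ← eq_mul_inv_iff_mul_eq hu0]
  · simp [r, constantCoeff_artinSchreierRoot]
  · simp [r, constantCoeff_artinSchreierRoot, hu]
end
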